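/- For every n ≥ 0 and every integer k ≥ 0 there exist constants C > 0 and δ > 0 such that: for all ε ∈ (0, δ) and every positive solution (v_m)_{m ≥ -1} of the dP_I initial value problem with parameter ε, one has |vₙ − b_n^{(k)}(ε)| ≤ C ε^{k+2}. Moreover, there exist C' > 0 and δ' > 0 such that for all ε ∈ (0, δ') and every such positive solution, |vₙ − ((n+1)ε − 2(n+1)²ε² + (8(n+1)³ + 4(n+1))ε³)| ≤ C' ε⁴. -/

import Mathlib

/-!
A positive solution gives a nonnegative fixed point `w n = v (n + 1)` of `T`. Since `T` is
antitone on nonnegative sequences, the iterates `b^{(k)} = T^{k+1} 0` alternate around `w`, so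
`|w - b^{(k)}| ≤ |b^{(k+1)} - b^{(k)}|`. At index `n` the map `T` is Lipschitz with constant
`ε (n + 1)` in the entries `n ± 1`, whence `b^{(k+1)}_n - b^{(k)}_n = O(ε^{k+2})`. The cubic is
the Taylor expansion of the rational function `b^{(2)}_n`, computed in closed form.
-/

/-- The map `T` acting on sequences: `T(u)₀ = ε/(1+u₁)`,
`T(u)ₙ = ε(n+1)/(1 + u_{n-1} + u_{n+1})` for `n ≥ 1`. -/
noncomputable def Tmap (ε : ℝ) (u : ℕ → ℝ) : ℕ → ℝ
  | 0 => ε / (1 + u 1)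
  | (n+1) => ε * ((n : ℝ) + 2) / (1 + u n + u (n+2))

/-- Shifted bound sequences: `bnd ε k = b^{(k-1)}`, i.e. `bnd ε 0 = b^{(-1)} = 0`
and `bnd ε (k+1) = T (bnd ε k)`, so that `b^{(k)} = bnd ε (k+1)` for `k ≥ -1`. -/
noncomputable def bnd (ε : ℝ) : ℕ → ℕ → ℝ
  | 0 => fun _ => 0
  | (k+1) => Tmap ε (bnd ε k)

/-- Shifted rescaled bounds: `rho ε k n = ρ_n^{(k-1)} = b_n^{(k-1)}/(ε(n+1))`. -/
noncomputable def rho (ε : ℝ) (k n : ℕ) : ℝ := bnd ε k n / (ε * ((n : ℝ) + 1))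

/-- The differences `Δd ε k n = Δ_n^{(k)} = (-1)^k (ρ_n^{(k)} - ρ_n^{(k-1)})` for `k ≥ 0`. -/
noncomputable def Δd (ε : ℝ) (k n : ℕ) : ℝ := (-1 : ℝ)^k * (rho ε (k+1) n - rho ε k n)

open Function

section

variable {ε : ℝ}

lemma bnd_nonneg (hε : 0 ≤ ε) (k n : ℕ) : 0 ≤ bnd ε k n := by
  induction k generalizing n with
  | zero => exact le_rfl
  | succ k ih =>
    cases n with
    | zero => exact div_nonneg hε (by linarith [ih 1])
    | succ n => exact div_nonneg (by positivity) (by linarith [ih n, ih (n + 2)])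

lemma Tmap_antitone (hε : 0 ≤ ε) {u u' : ℕ → ℝ} (hu : ∀ n, 0 ≤ u n) (h : u ≤ u') :
    Tmap ε u' ≤ Tmap ε u := by
  intro n
  cases n with
  | zero => exact div_le_div_of_nonneg_left hε (by linarith [hu 1]) (by linarith [h 1])
  | succ n =>
    exact div_le_div_of_nonneg_left (by positivity) (by linarith [hu n, hu (n + 2)])
      (by linarith [h n, h (n + 2)])

lemma abs_div_one_add_sub_div_one_add_le {a b c : ℝ} (ha : 0 ≤ a) (hb : 0 ≤ b) (hc : 0 ≤ c) :
    |c / (1 + a) - c / (1 + b)| ≤ c * |a - b| := by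
  have hab : 1 ≤ (1 + a) * (1 + b) := by nlinarith
  rw [div_sub_div _ _ (by positivity) (by positivity), abs_div,
    abs_of_pos (by positivity : 0 < (1 + a) * (1 + b)), abs_sub_comm a]
  calc |c * (1 + b) - (1 + a) * c| / ((1 + a) * (1 + b)) ≤ |c * (1 + b) - (1 + a) * c| :=
        div_le_self (abs_nonneg _) hab
    _ = c * |b - a| := by
      rw [show c * (1 + b) - (1 + a) * c = c * (b - a) by ring, abs_mul, abs_of_nonneg hc]

/-- For `n = 0` the index `n - 1` truncates to `0`, which only weakens the bound. -/
lemma abs_Tmap_sub_le (hε : 0 ≤ ε) {u u' : ℕ → ℝ} (hu : ∀ n, 0 ≤ u n) (hu' : ∀ n, 0 ≤ u' n)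
    (n : ℕ) :
    |Tmap ε u n - Tmap ε u' n|
      ≤ ε * ((n : ℝ) + 1) * (|u (n - 1) - u' (n - 1)| + |u (n + 1) - u' (n + 1)|) := by
  cases n with
  | zero =>
    have := abs_div_one_add_sub_div_one_add_le (hu 1) (hu' 1) hε
    simp only [Tmap, Nat.cast_zero, zero_add, mul_one]
    exact this.trans (mul_le_mul_of_nonneg_left (le_add_of_nonneg_left (abs_nonneg _)) hε)
  | succ n =>
    have := abs_div_one_add_sub_div_one_add_le (add_nonneg (hu n) (hu (n + 2)))
      (add_nonneg (hu' n) (hu' (n + 2))) (by positivity : 0 ≤ ε * ((n : ℝ) + 2))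
    have htri : |u n + u (n + 2) - (u' n + u' (n + 2))|
        ≤ |u n - u' n| + |u (n + 2) - u' (n + 2)| := by
      rw [add_sub_add_comm]; exact abs_add_le _ _
    simp only [Tmap, ← add_assoc, Nat.add_sub_cancel, Nat.cast_succ] at this ⊢
    calc _ ≤ _ := this
      _ ≤ ε * ((n : ℝ) + 2) * (|u n - u' n| + |u (n + 2) - u' (n + 2)|) :=
        mul_le_mul_of_nonneg_left htri (by positivity)
      _ = _ := by ring

lemma bnd_one (n : ℕ) : bnd ε 1 n = ε * ((n : ℝ) + 1) := by
  cases n with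
  | zero => simp [bnd, Tmap]
  | succ n => simp only [bnd, Tmap, add_zero, div_one, Nat.cast_succ]; ring

lemma exists_abs_bnd_succ_sub_bnd_le (k n : ℕ) :
    ∃ C > 0, ∀ ε > 0, |bnd ε (k + 1) n - bnd ε k n| ≤ C * ε ^ (k + 1) := by
  induction k generalizing n with
  | zero =>
    refine ⟨(n : ℝ) + 1, by positivity, fun ε hε => ?_⟩
    rw [bnd_one, show bnd ε 0 n = 0 from rfl, sub_zero, abs_of_pos (by positivity)]
    exact le_of_eq (by ring)
  | succ k ih =>
    obtain ⟨C₁, hC₁, h₁⟩ := ih (n - 1)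
    obtain ⟨C₂, hC₂, h₂⟩ := ih (n + 1)
    refine ⟨((n : ℝ) + 1) * (C₁ + C₂), by positivity, fun ε hε => ?_⟩
    calc |bnd ε (k + 2) n - bnd ε (k + 1) n|
        ≤ ε * ((n : ℝ) + 1) * (|bnd ε (k + 1) (n - 1) - bnd ε k (n - 1)|
            + |bnd ε (k + 1) (n + 1) - bnd ε k (n + 1)|) :=
          abs_Tmap_sub_le hε.le (bnd_nonneg hε.le _) (bnd_nonneg hε.le _) n
      _ ≤ ε * ((n : ℝ) + 1) * (C₁ * ε ^ (k + 1) + C₂ * ε ^ (k + 1)) := by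
          gcongr
          exacts [h₁ ε hε, h₂ ε hε]
      _ = ((n : ℝ) + 1) * (C₁ + C₂) * ε ^ (k + 2) := by ring

lemma isFixedPt_Tmap_of_solution {v : ℕ → ℝ} (h0 : v 0 = 0)
    (hrec : ∀ m : ℕ, v (m + 1) * (v (m + 2) + v m + 1) = ε * ((m : ℝ) + 1))
    (hpos : ∀ m : ℕ, 0 < v (m + 1)) :
    IsFixedPt (Tmap ε) (fun m => v (m + 1)) := by
  funext m
  cases m with
  | zero =>
    have hd : 0 < 1 + v 2 := by linarith [hpos 1]
    simp only [Tmap, div_eq_iff hd.ne']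
    linear_combination -(hrec 0) + v 1 * h0
  | succ m =>
    have hd : 0 < 1 + v (m + 1) + v (m + 3) := by linarith [hpos m, hpos (m + 2)]
    have h := hrec (m + 1)
    push_cast at h
    simp only [Tmap, div_eq_iff hd.ne']
    linear_combination -h

lemma bnd_even_le_and_le_bnd_odd (hε : 0 ≤ ε) {w : ℕ → ℝ} (hw : ∀ n, 0 ≤ w n)
    (hfix : IsFixedPt (Tmap ε) w) (j : ℕ) : bnd ε (2 * j) ≤ w ∧ w ≤ bnd ε (2 * j + 1) := by
  have upper : ∀ k, bnd ε k ≤ w → w ≤ bnd ε (k + 1) := fun k h => by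
    rw [← hfix.eq]; exact Tmap_antitone hε (bnd_nonneg hε k) h
  induction j with
  | zero => exact ⟨hw, upper 0 hw⟩
  | succ j ih =>
    have lower : bnd ε (2 * j + 2) ≤ w := by
      rw [← hfix.eq]; exact Tmap_antitone hε hw ih.2
    exact ⟨lower, upper _ lower⟩

lemma mem_uIcc_bnd_of_isFixedPt (hε : 0 ≤ ε) {w : ℕ → ℝ} (hw : ∀ n, 0 ≤ w n)
    (hfix : IsFixedPt (Tmap ε) w) (k n : ℕ) : w n ∈ Set.uIcc (bnd ε k n) (bnd ε (k + 1) n) := by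
  obtain ⟨j, rfl | rfl⟩ := Nat.even_or_odd' k
  · obtain ⟨h₁, h₂⟩ := bnd_even_le_and_le_bnd_odd hε hw hfix j
    exact Set.mem_uIcc_of_le (h₁ n) (h₂ n)
  · exact Set.mem_uIcc_of_ge ((bnd_even_le_and_le_bnd_odd hε hw hfix (j + 1)).1 n)
      ((bnd_even_le_and_le_bnd_odd hε hw hfix j).2 n)

lemma exists_abs_sub_bnd_le_of_isFixedPt (k n : ℕ) :
    ∃ C > 0, ∀ ε > 0, ∀ w : ℕ → ℝ, (∀ n, 0 ≤ w n) → IsFixedPt (Tmap ε) w →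
      |w n - bnd ε (k + 1) n| ≤ C * ε ^ (k + 2) := by
  obtain ⟨C, hC, h⟩ := exists_abs_bnd_succ_sub_bnd_le (k + 1) n
  exact ⟨C, hC, fun ε hε w hw hfix =>
    (Set.abs_sub_left_of_mem_uIcc (mem_uIcc_bnd_of_isFixedPt hε.le hw hfix (k + 1) n)).trans
      (h ε hε)⟩

lemma bnd_two (n : ℕ) :
    bnd ε 2 n = ε * ((n : ℝ) + 1) / (1 + 2 * ε * ((n : ℝ) + 1)) := by
  cases n with
  | zero =>
    show ε / (1 + bnd ε 1 1) = _
    rw [bnd_one]; push_cast; ring_nf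
  | succ n =>
    show ε * ((n : ℝ) + 2) / (1 + bnd ε 1 n + bnd ε 1 (n + 2)) = _
    rw [bnd_one, bnd_one]; push_cast; ring_nf

lemma bnd_three (hε : 0 ≤ ε) (n : ℕ) :
    bnd ε 3 n = ε * ((n : ℝ) + 1) * (1 + 2 * ε * n) * (1 + 2 * ε * ((n : ℝ) + 2))
      / (1 + 6 * ε * ((n : ℝ) + 1) + 8 * ε ^ 2 * n * ((n : ℝ) + 2)) := by
  have hQ : 0 < 1 + 6 * ε * ((n : ℝ) + 1) + 8 * ε ^ 2 * n * ((n : ℝ) + 2) := by positivity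
  cases n with
  | zero =>
    show ε / (1 + bnd ε 2 1) = _
    rw [bnd_two]
    field_simp
    ring
  | succ n =>
    show ε * ((n : ℝ) + 2) / (1 + bnd ε 2 n + bnd ε 2 (n + 2)) = _
    rw [bnd_two, bnd_two, eq_div_iff hQ.ne']
    field_simp
    push_cast
    ring

end

lemma abs_sub_cubic_le {x ε : ℝ} (hx : 0 ≤ x) (hε : 0 ≤ ε) (hε₁ : ε ≤ 1) :
    |ε * (x + 1) * (1 + 2 * ε * x) * (1 + 2 * ε * (x + 2))
          / (1 + 6 * ε * (x + 1) + 8 * ε ^ 2 * x * (x + 2))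
      - ((x + 1) * ε - 2 * (x + 1) ^ 2 * ε ^ 2 + (8 * (x + 1) ^ 3 + 4 * (x + 1)) * ε ^ 3)|
      ≤ 200 * (x + 1) ^ 5 * ε ^ 4 := by
  set N := x + 1
  have hQ : 1 ≤ 1 + 6 * ε * N + 8 * ε ^ 2 * x * (x + 2) := by
    have : 0 ≤ 6 * ε * N + 8 * ε ^ 2 * x * (x + 2) := by positivity
    linarith
  have key : ε * N * (1 + 2 * ε * x) * (1 + 2 * ε * (x + 2))
      - (1 + 6 * ε * N + 8 * ε ^ 2 * x * (x + 2))
          * (N * ε - 2 * N ^ 2 * ε ^ 2 + (8 * N ^ 3 + 4 * N) * ε ^ 3)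
      = -(ε ^ 4 * ((32 * N ^ 4 + 40 * N ^ 2) + ε * (64 * N ^ 5 - 32 * N ^ 3 - 32 * N))) := by
    simp only [N]; ring
  have hQ₀ := zero_lt_one.trans_le hQ
  rw [div_sub' hQ₀.ne', key, abs_div, abs_neg, abs_of_pos hQ₀]
  have hN : 1 ≤ N := by simp only [N]; linarith
  have hB : 0 ≤ 64 * N ^ 5 - 32 * N ^ 3 - 32 * N := by
    have : 64 * N ^ 5 - 32 * N ^ 3 - 32 * N = 32 * N * (N ^ 2 - 1) * (2 * N ^ 2 + 1) := by ring
    rw [this]; have : 0 ≤ N ^ 2 - 1 := by nlinarith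
    positivity
  have hsum : 0 ≤ (32 * N ^ 4 + 40 * N ^ 2) + ε * (64 * N ^ 5 - 32 * N ^ 3 - 32 * N) :=
    add_nonneg (by positivity) (mul_nonneg hε hB)
  rw [abs_of_nonneg (mul_nonneg (by positivity) hsum)]
  have hpow : N ^ 2 ≤ N ^ 4 ∧ N ^ 4 ≤ N ^ 5 :=
    ⟨pow_le_pow_right₀ hN (by norm_num), pow_le_pow_right₀ hN (by norm_num)⟩
  calc ε ^ 4 * ((32 * N ^ 4 + 40 * N ^ 2) + ε * (64 * N ^ 5 - 32 * N ^ 3 - 32 * N)) / _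
      ≤ ε ^ 4 * ((32 * N ^ 4 + 40 * N ^ 2) + ε * (64 * N ^ 5 - 32 * N ^ 3 - 32 * N)) :=
        div_le_self (by positivity) hQ
    _ ≤ ε ^ 4 * ((32 * N ^ 4 + 40 * N ^ 2) + (64 * N ^ 5 - 32 * N ^ 3 - 32 * N)) := by
        gcongr; nlinarith
    _ ≤ 200 * N ^ 5 * ε ^ 4 := by
        rw [mul_comm]; gcongr; nlinarith

/-- `v m` stands for `v_{m-1}`. -/
theorem statement12 (n k : ℕ) :
    (∃ C > (0 : ℝ), ∃ δ > (0 : ℝ), ∀ ε : ℝ, 0 < ε → ε < δ →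
      ∀ v : ℕ → ℝ, v 0 = 0 →
        (∀ m : ℕ, v (m+1) * (v (m+2) + v m + 1) = ε * ((m : ℝ) + 1)) →
        (∀ m : ℕ, 0 < v (m+1)) →
        |v (n+1) - bnd ε (k+1) n| ≤ C * ε^(k+2)) ∧
    (∃ C' > (0 : ℝ), ∃ δ' > (0 : ℝ), ∀ ε : ℝ, 0 < ε → ε < δ' →
      ∀ v : ℕ → ℝ, v 0 = 0 →
        (∀ m : ℕ, v (m+1) * (v (m+2) + v m + 1) = ε * ((m : ℝ) + 1)) →
        (∀ m : ℕ, 0 < v (m+1)) →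
        |v (n+1) - (((n : ℝ) + 1) * ε - 2 * ((n : ℝ) + 1)^2 * ε^2
          + (8 * ((n : ℝ) + 1)^3 + 4 * ((n : ℝ) + 1)) * ε^3)| ≤ C' * ε^4) := by
  obtain ⟨C, hC, hbound⟩ := exists_abs_sub_bnd_le_of_isFixedPt k n
  obtain ⟨C₃, hC₃, hbound₃⟩ := exists_abs_sub_bnd_le_of_isFixedPt 2 n
  refine ⟨⟨C, hC, 1, one_pos, fun ε hε _ v h0 hrec hpos => ?_⟩,
    ⟨C₃ + 200 * ((n : ℝ) + 1) ^ 5, by positivity, 1, one_pos, fun ε hε hε₁ v h0 hrec hpos => ?_⟩⟩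
  · exact hbound ε hε _ (fun m => (hpos m).le) (isFixedPt_Tmap_of_solution h0 hrec hpos)
  · have hsol : |v (n + 1) - bnd ε 3 n| ≤ C₃ * ε ^ 4 :=
      hbound₃ ε hε _ (fun m => (hpos m).le) (isFixedPt_Tmap_of_solution h0 hrec hpos)
    have hcubic := abs_sub_cubic_le n.cast_nonneg hε.le hε₁.le
    rw [← bnd_three hε.le] at hcubic
    refine (abs_sub_le _ (bnd ε 3 n) _).trans ?_
    linarith
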